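/- The Lukaciewicz path uniquely determines a finite plane tree: if θ₁ and θ₂ are finite plane trees with #θ₁ = #θ₂ and with equal Lukaciewicz paths (V_{θ₁}(n) = V_{θ₂}(n) for all 0 ≤ n ≤ #θ₁), then θ₁ = θ₂. -/

import Mathlib

namespace IPC
/-- A plane tree: a set of finite sequences of positive integers (vertices), containing
the root `[]`, closed under prefixes, closed under earlier siblings, with labels ≥ 1. -/
def IsPlaneTree (T : Set (List ℕ)) : Prop :=
  [] ∈ T ∧
  (∀ v ∈ T, ∀ u : List ℕ, u <+: v → u ∈ T) ∧
  (∀ (v : List ℕ) (i j : ℕ), v ++ [i] ∈ T → 1 ≤ j → j ≤ i → v ++ [j] ∈ T) ∧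
  (∀ v ∈ T, ∀ i ∈ v, 1 ≤ i)
/-- `kv T v` : number of children of the vertex `v` in `T`. -/
noncomputable def kv (T : Set (List ℕ)) (v : List ℕ) : ℕ := {i : ℕ | v ++ [i] ∈ T}.ncard
/-- `rank T v` : number of strict lexicographic predecessors of `v` in `T`. -/
noncomputable def rank (T : Set (List ℕ)) (v : List ℕ) : ℕ := {u ∈ T | u < v}.ncard
/-- Lukaciewicz path of `T`: `luk T n = ∑_{i<n} (k_{vⁱ} - 1)` where `vⁱ` is the `i`-th
vertex of `T` in lexicographic order. -/
noncomputable def luk (T : Set (List ℕ)) (n : ℕ) : ℤ :=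
  ∑ᶠ v ∈ {u ∈ T | rank T u < n}, ((kv T v : ℤ) - 1)
/-- `T^v`: the set of vertices of `T` lexicographically ≤ `v`. -/
def below (T : Set (List ℕ)) (v : List ℕ) : Set (List ℕ) := {u ∈ T | u ≤ v}
/-- `nEdge T v = n(v,T)`: the number of edges of `T` with exactly one endpoint in `T^v`;
an edge is identified with its child endpoint. -/
noncomputable def nEdge (T : Set (List ℕ)) (v : List ℕ) : ℕ :=
  {c ∈ T | c ≠ [] ∧ Xor' (c.dropLast ∈ below T v) (c ∈ below T v)}.ncard

/-!
Listing the vertices in lexicographic order, the vertex following the first `n` ones is the least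
vertex not yet listed. Its parent `p` has already been listed, and the increment of the
Łukasiewicz path at `p` records `k_p`; since the children of `p` are exactly `p1, …, pk_p`, both
trees must have the same next vertex. By induction, the two trees have the same first `n` vertices
for every `n`.
-/

lemma dropLast_lt {w : List ℕ} (hw : w ≠ []) : w.dropLast < w := by
  conv_rhs => rw [← List.dropLast_append_getLast hw]
  simpa using List.Lex.append_left (· < ·) (List.Lex.nil (a := w.getLast hw) (l := [])) w.dropLast

section Rank

variable {T : Set (List ℕ)} {n : ℕ} {u v w : List ℕ}

lemma rank_lt_rank (hf : T.Finite) (hu : u ∈ T) (huv : u < v) : rank T u < rank T v :=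
  Set.ncard_lt_ncard
    ⟨fun _ hx => ⟨hx.1, hx.2.trans huv⟩, fun hsub => lt_irrefl u (hsub ⟨hu, huv⟩).2⟩
    (hf.subset (Set.sep_subset _ _))

lemma rank_injOn (hf : T.Finite) : Set.InjOn (rank T) T := fun u hu v hv huv => by
  rcases lt_trichotomy u v with hlt | heq | hgt
  · exact absurd huv (rank_lt_rank hf hu hlt).ne
  · exact heq
  · exact absurd huv (rank_lt_rank hf hv hgt).ne'

lemma rank_lt_ncard (hf : T.Finite) (hv : v ∈ T) : rank T v < T.ncard :=
  Set.ncard_lt_ncard ⟨Set.sep_subset _ _, fun hsub => lt_irrefl v (hsub hv).2⟩ hf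

lemma exists_rank_eq (hf : T.Finite) (hn : n < T.ncard) : ∃ v ∈ T, rank T v = n := by
  have himage : rank T '' T = Set.Iio T.ncard := by
    refine Set.eq_of_subset_of_ncard_le ?_ ?_ (Set.finite_Iio _)
    · rintro _ ⟨v, hv, rfl⟩
      exact rank_lt_ncard hf hv
    · rw [Set.ncard_Iio_nat, (rank_injOn hf).ncard_image]
  exact himage.ge hn

def firstVertices (T : Set (List ℕ)) (n : ℕ) : Set (List ℕ) := {u ∈ T | rank T u < n}

lemma firstVertices_zero : firstVertices T 0 = ∅ := by
  simp [firstVertices]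

lemma firstVertices_ncard (hf : T.Finite) : firstVertices T T.ncard = T :=
  Set.sep_eq_self_iff_mem_true.mpr fun _ hv => rank_lt_ncard hf hv

lemma firstVertices_rank_succ (hf : T.Finite) (hw : w ∈ T) :
    firstVertices T (rank T w + 1) = insert w (firstVertices T (rank T w)) := by
  ext u
  simp only [firstVertices, Set.mem_sep_iff, Set.mem_insert_iff, Nat.lt_succ_iff_lt_or_eq]
  constructor
  · rintro ⟨hu, hlt | heq⟩
    · exact Or.inr ⟨hu, hlt⟩
    · exact Or.inl (rank_injOn hf hu hw heq)
  · rintro (rfl | ⟨hu, hlt⟩)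
    · exact ⟨hw, Or.inr rfl⟩
    · exact ⟨hu, Or.inl hlt⟩

lemma rank_firstVertices (hf : T.Finite) (hu : u ∈ firstVertices T n) :
    rank (firstVertices T n) u = rank T u := by
  refine congrArg Set.ncard (Set.ext fun x => ⟨fun hx => ⟨hx.1.1, hx.2⟩, fun hx => ?_⟩)
  exact ⟨⟨hx.1, (rank_lt_rank hf hx.1 hx.2).trans hu.2⟩, hx.2⟩

lemma le_of_notMem_firstVertices_rank (hf : T.Finite) (hu : u ∈ T)
    (hu' : u ∉ firstVertices T (rank T w)) : w ≤ u :=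
  not_lt.mp fun huw => hu' ⟨hu, rank_lt_rank hf hu huw⟩

lemma luk_rank_succ (hf : T.Finite) (hw : w ∈ T) :
    luk T (rank T w + 1) = luk T (rank T w) + ((kv T w : ℤ) - 1) := by
  rw [luk, ← firstVertices, firstVertices_rank_succ hf hw,
    finsum_mem_insert _ (fun h => lt_irrefl _ h.2)
      (hf.subset (Set.sep_subset _ _) : (firstVertices T (rank T w)).Finite), add_comm]
  rfl

end Rank

section PlaneTree

variable {T₁ T₂ : Set (List ℕ)} {n : ℕ} {p w : List ℕ}

lemma children_eq_Icc {T : Set (List ℕ)} (h : IsPlaneTree T) (hf : T.Finite) (v : List ℕ) :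
    {i : ℕ | v ++ [i] ∈ T} = Set.Icc 1 (kv T v) := by
  set C := {i : ℕ | v ++ [i] ∈ T}
  change C = Set.Icc 1 C.ncard
  have hCf : C.Finite := hf.preimage fun _ _ _ _ hij => by simpa using hij
  rcases C.eq_empty_or_nonempty with hC | hC
  · rw [hC, Set.ncard_empty, Set.Icc_eq_empty (by omega)]
  obtain ⟨m, hm, hmax⟩ := Set.exists_max_image C id hCf hC
  have hCm : C = Set.Icc 1 m := Set.ext fun i =>
    ⟨fun hi => ⟨h.2.2.2 _ hi i (by simp), hmax i hi⟩, fun hi => h.2.2.1 v m i hm hi.1 hi.2⟩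
  rw [hCm, Set.ncard_Icc_nat, Nat.add_sub_cancel]

lemma mem_of_kv_dropLast_eq (h₁ : IsPlaneTree T₁) (h₂ : IsPlaneTree T₂)
    (hf₁ : T₁.Finite) (hf₂ : T₂.Finite) (hw : w ∈ T₁) (hne : w ≠ [])
    (hk : kv T₁ w.dropLast = kv T₂ w.dropLast) : w ∈ T₂ := by
  rw [← List.dropLast_append_getLast hne] at hw ⊢
  have hchild : w.getLast hne ∈ {i : ℕ | w.dropLast ++ [i] ∈ T₁} := hw
  rwa [children_eq_Icc h₁ hf₁, hk, ← children_eq_Icc h₂ hf₂] at hchild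

lemma kv_eq_of_firstVertices_eq (hf₁ : T₁.Finite) (hf₂ : T₂.Finite)
    (hF : firstVertices T₁ n = firstVertices T₂ n)
    (hluk : ∀ m ≤ n, luk T₁ m = luk T₂ m) (hp : p ∈ firstVertices T₁ n) :
    kv T₁ p = kv T₂ p := by
  have hp₂ : p ∈ firstVertices T₂ n := hF ▸ hp
  have hr : rank T₁ p = rank T₂ p := by
    rw [← rank_firstVertices hf₁ hp, hF, rank_firstVertices hf₂ hp₂]
  have hsucc := hluk _ hp.2
  rw [luk_rank_succ hf₁ hp.1, hr, luk_rank_succ hf₂ hp₂.1, ← hr, hluk _ hp.2.le] at hsucc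
  have := add_left_cancel hsucc
  omega

lemma mem_of_kv_eq_on_firstVertices (h₁ : IsPlaneTree T₁) (h₂ : IsPlaneTree T₂)
    (hf₁ : T₁.Finite) (hf₂ : T₂.Finite) (hk : ∀ p ∈ firstVertices T₁ n, kv T₁ p = kv T₂ p)
    (hw : w ∈ T₁) (hr : rank T₁ w = n) : w ∈ T₂ := by
  rcases eq_or_ne w [] with rfl | hne
  · exact h₂.1
  have hp₁ : w.dropLast ∈ T₁ := h₁.2.1 w hw _ (List.dropLast_prefix w)
  have hp : w.dropLast ∈ firstVertices T₁ n := ⟨hp₁, hr ▸ rank_lt_rank hf₁ hp₁ (dropLast_lt hne)⟩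
  exact mem_of_kv_dropLast_eq h₁ h₂ hf₁ hf₂ hw hne (hk _ hp)

lemma firstVertices_succ_eq (h₁ : IsPlaneTree T₁) (h₂ : IsPlaneTree T₂)
    (hf₁ : T₁.Finite) (hf₂ : T₂.Finite) (hn₁ : n < T₁.ncard) (hn₂ : n < T₂.ncard)
    (hF : firstVertices T₁ n = firstVertices T₂ n) (hluk : ∀ m ≤ n, luk T₁ m = luk T₂ m) :
    firstVertices T₁ (n + 1) = firstVertices T₂ (n + 1) := by
  obtain ⟨w₁, hw₁, hr₁⟩ := exists_rank_eq hf₁ hn₁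
  obtain ⟨w₂, hw₂, hr₂⟩ := exists_rank_eq hf₂ hn₂
  have hk₁₂ : ∀ p ∈ firstVertices T₁ n, kv T₁ p = kv T₂ p :=
    fun p hp => kv_eq_of_firstVertices_eq hf₁ hf₂ hF hluk hp
  have hk₂₁ : ∀ p ∈ firstVertices T₂ n, kv T₂ p = kv T₁ p :=
    fun p hp => (kv_eq_of_firstVertices_eq hf₁ hf₂ hF hluk (hF ▸ hp)).symm
  -- each of `w₁`, `w₂` is the least vertex of its tree outside the common first `n` vertices,
  -- and lies in the other tree
  have hw₁₂ : w₂ ≤ w₁ := by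
    refine le_of_notMem_firstVertices_rank hf₂ (mem_of_kv_eq_on_firstVertices h₁ h₂ hf₁ hf₂ hk₁₂
      hw₁ hr₁) ?_
    rw [hr₂, ← hF]
    exact fun h => (h.2.trans_eq hr₁.symm).false
  have hw₂₁ : w₁ ≤ w₂ := by
    refine le_of_notMem_firstVertices_rank hf₁ (mem_of_kv_eq_on_firstVertices h₂ h₁ hf₂ hf₁ hk₂₁
      hw₂ hr₂) ?_
    rw [hr₁, hF]
    exact fun h => (h.2.trans_eq hr₂.symm).false
  obtain rfl := le_antisymm hw₂₁ hw₁₂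
  rw [← hr₁, firstVertices_rank_succ hf₁ hw₁, hr₁, hF, ← hr₂, firstVertices_rank_succ hf₂ hw₂]

end PlaneTree

/-- The Lukaciewicz path uniquely determines a finite plane tree. -/
theorem luk_determines_finite_tree (T₁ T₂ : Set (List ℕ))
    (h₁ : IsPlaneTree T₁) (h₂ : IsPlaneTree T₂)
    (hf₁ : T₁.Finite) (hf₂ : T₂.Finite)
    (hcard : T₁.ncard = T₂.ncard)
    (hluk : ∀ n : ℕ, n ≤ T₁.ncard → luk T₁ n = luk T₂ n) :
    T₁ = T₂ := by
  have hagree : ∀ n ≤ T₁.ncard, firstVertices T₁ n = firstVertices T₂ n := by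
    intro n
    induction n with
    | zero => simp [firstVertices_zero]
    | succ n ih =>
      intro hn
      exact firstVertices_succ_eq h₁ h₂ hf₁ hf₂ (by omega) (by omega) (ih (by omega))
        fun m hm => hluk m (by omega)
  calc T₁ = firstVertices T₁ T₁.ncard := (firstVertices_ncard hf₁).symm
    _ = firstVertices T₂ T₂.ncard := hcard ▸ hagree _ le_rfl
    _ = T₂ := firstVertices_ncard hf₂

end IPC
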